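/- Uniform law of large numbers: sup_{a ∈ M} |(1/N) Σ_{j=1}^N X_j(a) − E[X(a)]| converges to 0 almost surely as N → ∞. -/

import Mathlib

/-!
By the strong law of large numbers, almost surely the empirical means converge at every point of
a countable dense set `D ⊆ M`, and so do the empirical means of the oscillations
`sup {|X(a) - X(b)| : a, b ∈ D, d(a, b) < δ}`. The expected oscillation tends to `0` with `δ` by
dominated convergence, so almost surely the empirical means form an equicontinuous sequence. On a
compact space, an equicontinuous sequence converging on a dense set to a continuous limit (here
`a ↦ E[X(a)]`, continuous by dominated convergence) converges uniformly.
-/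

open MeasureTheory Filter Topology ProbabilityTheory Set

section Oscillation

variable {M : Type*} [PseudoMetricSpace M]

-- Only pairs from a countable set `D` are used, so that this is a measurable function of `f`.
noncomputable def oscillationOn (D : Set M) (δ : ℝ) (f : M → ℝ) : ℝ :=
  ⨆ p : ↥({p : M × M | dist p.1 p.2 < δ} ∩ D ×ˢ D), |f p.1.1 - f p.1.2|

lemma oscillationOn_nonneg (D : Set M) (δ : ℝ) (f : M → ℝ) : 0 ≤ oscillationOn D δ f :=
  Real.iSup_nonneg fun _ => abs_nonneg _

lemma oscillationOn_le_two_mul {D : Set M} {f : M → ℝ} {C : ℝ} (hC : 0 ≤ C)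
    (hf : ∀ x ∈ D, |f x| ≤ C) (δ : ℝ) : oscillationOn D δ f ≤ 2 * C :=
  Real.iSup_le (fun p => (abs_sub _ _).trans (by linarith [hf _ p.2.2.1, hf _ p.2.2.2]))
    (by positivity)

lemma measurable_oscillationOn {D : Set M} (hD : D.Countable) (δ : ℝ) :
    Measurable (oscillationOn D δ) := by
  have : Countable ↥({p : M × M | dist p.1 p.2 < δ} ∩ D ×ˢ D) :=
    ((hD.prod hD).mono inter_subset_right).to_subtype
  exact Measurable.iSup fun p =>
    ((measurable_pi_apply p.1.1).sub (measurable_pi_apply p.1.2)).abs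

lemma tendsto_oscillationOn_zero (D : Set M) {f : M → ℝ} (hf : UniformContinuous f) :
    Tendsto (fun δ => oscillationOn D δ f) (𝓝 0) (𝓝 0) := by
  rw [Metric.tendsto_nhds_nhds]
  intro ε hε
  obtain ⟨δ₀, hδ₀, hf⟩ := Metric.uniformContinuous_iff.1 hf (ε / 2) (half_pos hε)
  refine ⟨δ₀, hδ₀, fun δ hδ => ?_⟩
  rw [Real.dist_0_eq_abs] at hδ
  have hle : oscillationOn D δ f ≤ ε / 2 := by
    refine Real.iSup_le (fun p => ?_) (half_pos hε).le
    rw [← Real.dist_eq]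
    exact (hf ((p.2.1.trans_le (le_abs_self δ)).trans hδ)).le
  rw [Real.dist_0_eq_abs, abs_of_nonneg (oscillationOn_nonneg D δ f)]
  linarith

lemma abs_sub_le_oscillationOn [CompactSpace M] {D : Set M} (hD : Dense D) {f : M → ℝ}
    (hf : Continuous f) {δ : ℝ} {a b : M} (hab : dist a b < δ) :
    |f a - f b| ≤ oscillationOn D δ f := by
  set F : M × M → ℝ := fun p => |f p.1 - f p.2|
  have hF : Continuous F := by fun_prop
  have hbdd : BddAbove (range fun p : ↥({p : M × M | dist p.1 p.2 < δ} ∩ D ×ˢ D) => F p) :=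
    (isCompact_range hF).bddAbove.mono (range_comp_subset_range Subtype.val F)
  have hsub : {p : M × M | dist p.1 p.2 < δ} ∩ D ×ˢ D ⊆ {p | F p ≤ oscillationOn D δ f} :=
    fun p hp => le_ciSup hbdd ⟨p, hp⟩
  have hclosure :=
    (hD.prod hD).open_subset_closure_inter (isOpen_lt continuous_dist continuous_const)
      (show (a, b) ∈ {p : M × M | dist p.1 p.2 < δ} from hab)
  exact (isClosed_le hF continuous_const).closure_subset_iff.2 hsub hclosure

lemma abs_average_sub_le_average_oscillationOn [CompactSpace M] {D : Set M} (hD : Dense D)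
    {f : ℕ → M → ℝ} (hf : ∀ j, Continuous (f j)) (N : ℕ) {δ : ℝ} {a b : M}
    (hab : dist a b < δ) :
    |(N : ℝ)⁻¹ * ∑ j ∈ Finset.range N, f j a - (N : ℝ)⁻¹ * ∑ j ∈ Finset.range N, f j b|
      ≤ (N : ℝ)⁻¹ * ∑ j ∈ Finset.range N, oscillationOn D δ (f j) := by
  rw [← mul_sub, ← Finset.sum_sub_distrib, abs_mul, abs_of_nonneg (by positivity)]
  gcongr
  exact (Finset.abs_sum_le_sum_abs _ _).trans
    (Finset.sum_le_sum fun j _ => abs_sub_le_oscillationOn hD (hf j) hab)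

end Oscillation

lemma equicontinuous_of_eventually_uniform {X α : Type*} [PseudoMetricSpace X]
    [PseudoMetricSpace α] {F : ℕ → X → α} (hc : ∀ n, Continuous (F n))
    (h : ∀ ε > 0, ∃ δ > 0, ∀ᶠ n in atTop, ∀ x y, dist x y < δ → dist (F n x) (F n y) < ε) :
    Equicontinuous F := by
  intro x₀
  rw [Metric.equicontinuousAt_iff_right]
  intro ε hε
  obtain ⟨δ, hδ, hF⟩ := h ε hε
  obtain ⟨N₀, hN₀⟩ := eventually_atTop.1 hF
  have hinitial : ∀ᶠ x in 𝓝 x₀, ∀ n ∈ Finset.range N₀, dist (F n x₀) (F n x) < ε :=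
    (eventually_all_finset _).2 fun n _ =>
      (Metric.tendsto_nhds.1 (hc n).continuousAt ε hε).mono fun x hx => by rwa [dist_comm]
  filter_upwards [hinitial, Metric.ball_mem_nhds x₀ hδ] with x hx hxδ n
  rcases lt_or_ge n N₀ with hn | hn
  · exact hx n (Finset.mem_range.2 hn)
  · exact hN₀ n hn x₀ x (by rwa [Metric.mem_ball, dist_comm] at hxδ)

lemma tendsto_iSup_abs_sub_of_equicontinuous {M : Type*} [TopologicalSpace M] [CompactSpace M]
    {F : ℕ → M → ℝ} {f : M → ℝ} (hF : Equicontinuous F) (hf : Continuous f) {D : Set M}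
    (hD : Dense D) (h : ∀ x ∈ D, Tendsto (F · x) atTop (𝓝 (f x))) :
    Tendsto (fun N => ⨆ x, |F N x - f x|) atTop (𝓝 0) := by
  have hpointwise : Tendsto F atTop (𝓝 f) :=
    tendsto_pi_nhds.2 fun x => (hF.isClosed_setOfPred_tendsto hf).closure_subset_iff.2 h (hD x)
  have hunif : TendstoUniformly F f atTop :=
    UniformFun.tendsto_iff_tendstoUniformly.1 ((hF.tendsto_uniformFun_iff_pi _ f).2 hpointwise)
  rw [Metric.tendsto_nhds]
  intro ε hε
  filter_upwards [Metric.tendstoUniformly_iff.1 hunif (ε / 2) (half_pos hε)] with N hN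
  have hle : ⨆ x, |F N x - f x| ≤ ε / 2 :=
    Real.iSup_le (fun x => by rw [← Real.dist_eq, dist_comm]; exact (hN x).le) (half_pos hε).le
  rw [Real.dist_0_eq_abs, abs_of_nonneg (Real.iSup_nonneg fun _ => abs_nonneg _)]
  linarith

section RandomFunction

variable {Ω : Type*} [MeasurableSpace Ω] {P : Measure Ω}

lemma ae_tendsto_average_comp {E : Type*} [MeasurableSpace E] {X : ℕ → Ω → E}
    (hindep : iIndepFun X P) (hident : ∀ j, IdentDistrib (X j) (X 0) P P) {F : E → ℝ}
    (hF : Measurable F) (hint : Integrable (fun ω => F (X 0 ω)) P) :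
    ∀ᵐ ω ∂P, Tendsto (fun N : ℕ => (N : ℝ)⁻¹ * ∑ j ∈ Finset.range N, F (X j ω)) atTop
      (𝓝 (∫ ω, F (X 0 ω) ∂P)) :=
  strong_law_ae (fun j => F ∘ X j) hint (fun _ _ hij => (hindep.indepFun hij).comp hF hF)
    fun j => (hident j).comp hF

variable {M : Type*} [PseudoMetricSpace M] {D : Set M} {g : Ω → ℝ}

lemma ae_norm_oscillationOn_le {X : Ω → M → ℝ} (hD : D.Countable) (hg : ∀ ω, 0 ≤ g ω)
    (hdom : ∀ a, ∀ᵐ ω ∂P, |X ω a| ≤ g ω) (δ : ℝ) :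
    ∀ᵐ ω ∂P, ‖oscillationOn D δ (X ω)‖ ≤ 2 * g ω := by
  filter_upwards [(ae_ball_iff hD).2 fun a _ => hdom a] with ω hω
  rw [Real.norm_of_nonneg (oscillationOn_nonneg _ _ _)]
  exact oscillationOn_le_two_mul (hg ω) hω δ

lemma integrable_oscillationOn {X : Ω → M → ℝ} (hD : D.Countable) (hX : AEMeasurable X P)
    (hg_int : Integrable g P) (hg : ∀ ω, 0 ≤ g ω) (hdom : ∀ a, ∀ᵐ ω ∂P, |X ω a| ≤ g ω)
    (δ : ℝ) : Integrable (fun ω => oscillationOn D δ (X ω)) P :=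
  (hg_int.const_mul 2).mono'
    ((measurable_oscillationOn hD δ).comp_aemeasurable hX).aestronglyMeasurable
    (ae_norm_oscillationOn_le hD hg hdom δ)

lemma tendsto_integral_oscillationOn [CompactSpace M] {X : Ω → M → ℝ} (hD : D.Countable)
    (hX : AEMeasurable X P) (hcont : ∀ᵐ ω ∂P, Continuous (X ω)) (hg_int : Integrable g P)
    (hg : ∀ ω, 0 ≤ g ω) (hdom : ∀ a, ∀ᵐ ω ∂P, |X ω a| ≤ g ω) :
    Tendsto (fun m : ℕ => ∫ ω, oscillationOn D (1 / (m + 1)) (X ω) ∂P) atTop (𝓝 0) := by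
  simpa only [integral_zero] using tendsto_integral_of_dominated_convergence
    (F := fun (m : ℕ) ω => oscillationOn D (1 / (m + 1)) (X ω)) (f := fun _ => 0)
    (fun ω => 2 * g ω)
    (fun m => ((measurable_oscillationOn hD _).comp_aemeasurable hX).aestronglyMeasurable)
    (hg_int.const_mul 2) (fun m => ae_norm_oscillationOn_le hD hg hdom _)
    (hcont.mono fun ω hω => (tendsto_oscillationOn_zero D
      (CompactSpace.uniformContinuous_of_continuous hω)).comp
        tendsto_one_div_add_atTop_nhds_zero_nat)

lemma ae_equicontinuous_average [CompactSpace M] {X : ℕ → Ω → M → ℝ} (hindep : iIndepFun X P)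
    (hident : ∀ j, IdentDistrib (X j) (X 0) P P) (hcont : ∀ j, ∀ᵐ ω ∂P, Continuous (X j ω))
    (hg_int : Integrable g P) (hg : ∀ ω, 0 ≤ g ω) (hdom : ∀ a, ∀ᵐ ω ∂P, |X 0 ω a| ≤ g ω)
    (hDc : D.Countable) (hDd : Dense D) :
    ∀ᵐ ω ∂P, Equicontinuous fun (N : ℕ) (a : M) => (N : ℝ)⁻¹ * ∑ j ∈ Finset.range N, X j ω a := by
  have hX0 := (hident 0).aemeasurable_fst
  have hslln : ∀ᵐ ω ∂P, ∀ m : ℕ, Tendsto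
      (fun N : ℕ => (N : ℝ)⁻¹ * ∑ j ∈ Finset.range N, oscillationOn D (1 / (m + 1)) (X j ω))
      atTop (𝓝 (∫ ω, oscillationOn D (1 / (m + 1)) (X 0 ω) ∂P)) :=
    ae_all_iff.2 fun m => ae_tendsto_average_comp hindep hident (measurable_oscillationOn hDc _)
      (integrable_oscillationOn hDc hX0 hg_int hg hdom _)
  have hmean := tendsto_integral_oscillationOn hDc hX0 (hcont 0) hg_int hg hdom
  filter_upwards [hslln, ae_all_iff.2 hcont] with ω hω hcω
  refine equicontinuous_of_eventually_uniform (fun N => by fun_prop) fun ε hε => ?_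
  obtain ⟨m, hm⟩ := (hmean.eventually (gt_mem_nhds hε)).exists
  refine ⟨1 / (m + 1), by positivity, ?_⟩
  filter_upwards [(hω m).eventually (gt_mem_nhds hm)] with N hN a b hab
  rw [Real.dist_eq]
  exact (abs_average_sub_le_average_oscillationOn hDd hcω N hab).trans_lt hN

end RandomFunction

theorem uniform_law_of_large_numbers_general
    {Ω : Type*} [MeasurableSpace Ω] (P : Measure Ω)
    {M : Type*} [MetricSpace M] [CompactSpace M]
    (Xf : ℕ → Ω → M → ℝ)
    (hindep : iIndepFun Xf P)
    (hident : ∀ j, IdentDistrib (Xf j) (Xf 0) P P)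
    (hcont : ∀ j, ∀ᵐ ω ∂P, Continuous (Xf j ω))
    (g : Ω → ℝ) (hg_int : Integrable g P) (hg_nonneg : ∀ ω, 0 ≤ g ω)
    (hdom : ∀ a : M, ∀ᵐ ω ∂P, |Xf 0 ω a| ≤ g ω) :
    ∀ᵐ ω ∂P,
      Tendsto (fun N : ℕ =>
          ⨆ a : M, |(N : ℝ)⁻¹ * ∑ j ∈ Finset.range N, Xf j ω a - ∫ ω', Xf 0 ω' a ∂P|)
        atTop (𝓝 0) := by
  obtain ⟨D, hDc, hDd⟩ := TopologicalSpace.exists_countable_dense M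
  have hdom' : ∀ a, ∀ᵐ ω ∂P, ‖Xf 0 ω a‖ ≤ g ω := by simpa only [Real.norm_eq_abs] using hdom
  have hXa : ∀ a, AEStronglyMeasurable (fun ω => Xf 0 ω a) P := fun a =>
    ((measurable_pi_apply a).comp_aemeasurable (hident 0).aemeasurable_fst).aestronglyMeasurable
  have hmean : Continuous fun a => ∫ ω, Xf 0 ω a ∂P :=
    continuous_of_dominated hXa hdom' hg_int (hcont 0)
  have hpointwise : ∀ᵐ ω ∂P, ∀ a ∈ D, Tendsto
      (fun N : ℕ => (N : ℝ)⁻¹ * ∑ j ∈ Finset.range N, Xf j ω a) atTop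
      (𝓝 (∫ ω', Xf 0 ω' a ∂P)) :=
    (ae_ball_iff hDc).2 fun a _ => ae_tendsto_average_comp (F := fun f => f a) hindep hident
      (measurable_pi_apply a) (hg_int.mono' (hXa a) (hdom' a))
  filter_upwards [hpointwise,
    ae_equicontinuous_average hindep hident hcont hg_int hg_nonneg hdom hDc hDd] with ω hpt hequi
  exact tendsto_iSup_abs_sub_of_equicontinuous hequi hmean hDd hpt

/-- **Uniform law of large numbers.**
Let `M` be a compact metric space and `(X_j)` an i.i.d. sequence of random
functions on `M` (copies of `X_0`), almost surely continuous, and dominated by an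
integrable random variable `g`: `|X_0(a)| ≤ g` a.s. for every `a ∈ M`. Then
`sup_{a ∈ M} |(1/N) ∑_{j<N} X_j(a) − E[X_0(a)]| → 0` almost surely. -/
theorem uniform_law_of_large_numbers
    {Ω : Type*} [MeasurableSpace Ω] (P : Measure Ω) [IsProbabilityMeasure P]
    {M : Type*} [MetricSpace M] [CompactSpace M]
    (Xf : ℕ → Ω → M → ℝ)
    (hmeas : ∀ j, Measurable (Xf j))
    (hindep : iIndepFun Xf P)
    (hident : ∀ j, IdentDistrib (Xf j) (Xf 0) P P)
    (hcont : ∀ j, ∀ᵐ ω ∂P, Continuous (Xf j ω))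
    (g : Ω → ℝ) (hg_int : Integrable g P) (hg_nonneg : ∀ ω, 0 ≤ g ω)
    (hdom : ∀ a : M, ∀ᵐ ω ∂P, |Xf 0 ω a| ≤ g ω) :
    ∀ᵐ ω ∂P,
      Tendsto (fun N : ℕ =>
          ⨆ a : M, |(N : ℝ)⁻¹ * ∑ j ∈ Finset.range N, Xf j ω a - ∫ ω', Xf 0 ω' a ∂P|)
        atTop (𝓝 0) :=
  uniform_law_of_large_numbers_general P Xf hindep hident hcont g hg_int hg_nonneg hdom
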